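/- Let p be a prime, m ≥ 1, and let Φ : GF(2)^m → {0,…,p−1} be a map such that Φ(u) ≠ Φ(v) whenever u ≠ v and B_{t,M}(u) ∩ B_{t,M}(v) ≠ ∅ (a proper coloring of the mineral-confusability graph). Let C_t ⊆ GF(p)^n be a code with minimum Hamming distance at least 2t+1. Then C = { x ∈ GF(2)^{mn} : (Φ(x_1,…,x_m), Φ(x_{m+1},…,x_{2m}), …, Φ(x_{(n−1)m+1},…,x_{nm})) ∈ C_t } is a t-mineral-error-correcting code. -/

import Mathlib

/-!
If `z` lies in the mineral balls of two codewords `x` and `y`, then `x` and `y` differ in at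
most `2t` positions, hence in at most `2t` blocks, so their colour words are two codewords of
`C_t` at Hamming distance at most `2t` and therefore coincide. On the other hand a mineral error
restricts to a mineral error on every block, so on each block the balls of `x` and `y` meet;
as `Φ` is a proper colouring, equal colours then force equal blocks, i.e. `x = y`.
-/

def mineralError {n : ℕ} (t : ℕ) (x e : Fin n → ZMod 2) : Prop :=
  (Finset.univ.filter fun i => e i ≠ 0).card ≤ t ∧
  (∀ i : Fin n, 0 < (i : ℕ) → e i ≠ 0 →
    x i ≠ x ⟨(i : ℕ) - 1, lt_of_le_of_lt (Nat.sub_le _ _) i.isLt⟩)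

def mineralBall {n : ℕ} (t : ℕ) (x : Fin n → ZMod 2) : Set (Fin n → ZMod 2) :=
  {y | ∃ e, mineralError t x e ∧ y = x + e}

def mineralCorrecting {n : ℕ} (t : ℕ) (C : Finset (Fin n → ZMod 2)) : Prop :=
  ∀ x ∈ C, ∀ y ∈ C, x ≠ y → Disjoint (mineralBall t x) (mineralBall t y)

theorem block_lt {m n : ℕ} (j : Fin n) (i : Fin m) : (j : ℕ) * m + (i : ℕ) < m * n := by
  have h1 : (j : ℕ) * m + (i : ℕ) < ((j : ℕ) + 1) * m := by
    rw [Nat.succ_mul]; exact Nat.add_lt_add_left i.isLt _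
  have h2 : ((j : ℕ) + 1) * m ≤ n * m := Nat.mul_le_mul_right m j.isLt
  rw [Nat.mul_comm n m] at h2
  exact lt_of_lt_of_le h1 h2

lemma hammingNorm_comp_le_of_injective {ι κ β : Type*} [Fintype ι] [Fintype κ] [Zero β]
    [DecidableEq β] (x : ι → β) {f : κ → ι} (hf : Function.Injective f) :
    hammingNorm (x ∘ f) ≤ hammingNorm x :=
  Finset.card_le_card_of_injOn f (fun k hk => by simpa using hk) hf.injOn

lemma hammingDist_self_add {ι β : Type*} [Fintype ι] [AddLeftCancelMonoid β] [DecidableEq β]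
    (x e : ι → β) : hammingDist x (x + e) = hammingNorm e := by
  simp [hammingDist, hammingNorm]

section Block

variable {α : Type*} {m n : ℕ}

def blockPos (j : Fin n) (i : Fin m) : Fin (m * n) :=
  ⟨(j : ℕ) * m + (i : ℕ), block_lt j i⟩

def block (x : Fin (m * n) → α) (j : Fin n) : Fin m → α :=
  fun i => x (blockPos j i)

def blockIndex (k : Fin (m * n)) : Fin n :=
  ⟨(k : ℕ) / m, Nat.div_lt_of_lt_mul k.isLt⟩

lemma blockPos_injective (j : Fin n) : Function.Injective (blockPos (m := m) j) :=
  fun a b h => Fin.ext (by simpa [blockPos] using h)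

lemma blockIndex_blockPos (j : Fin n) (i : Fin m) : blockIndex (blockPos j i) = j := by
  refine Fin.ext (show ((j : ℕ) * m + (i : ℕ)) / m = j from ?_)
  rw [Nat.add_comm, Nat.add_mul_div_right _ _ i.pos,
    Nat.div_eq_of_lt i.isLt, Nat.zero_add]

lemma apply_eq_block_blockIndex (x : Fin (m * n) → α) (k : Fin (m * n)) :
    x k = block x (blockIndex k) ⟨(k : ℕ) % m, Nat.mod_lt _ (Nat.pos_of_mul_pos_right k.pos)⟩ := by
  simp only [block, blockPos, blockIndex, Nat.div_add_mod']

lemma block_injective : Function.Injective (block : (Fin (m * n) → α) → Fin n → Fin m → α) := by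
  intro x y h
  funext k
  rw [apply_eq_block_blockIndex x, apply_eq_block_blockIndex y, h]

lemma hammingDist_block_le [DecidableEq α] (x y : Fin (m * n) → α) :
    hammingDist (block x) (block y) ≤ hammingDist x y := by
  refine (Finset.card_le_card fun j hj => ?_).trans (Finset.card_image_le (f := blockIndex))
  obtain ⟨i, hi⟩ := Function.ne_iff.mp (Finset.mem_filter.mp hj).2
  exact Finset.mem_image.mpr
    ⟨_, Finset.mem_filter.mpr ⟨Finset.mem_univ _, hi⟩, blockIndex_blockPos j i⟩

end Block

section Mineral

variable {t : ℕ}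

lemma hammingDist_le_of_mem_mineralBall {n : ℕ} {x z : Fin n → ZMod 2}
    (hz : z ∈ mineralBall t x) : hammingDist x z ≤ t := by
  obtain ⟨e, he, rfl⟩ := hz
  exact (hammingDist_self_add x e).trans_le he.1

lemma mineralError.block {m n : ℕ} {x e : Fin (m * n) → ZMod 2} (h : mineralError t x e)
    (j : Fin n) : mineralError t (block x j) (block e j) := by
  refine ⟨(hammingNorm_comp_le_of_injective e (blockPos_injective j)).trans h.1, ?_⟩
  intro i hi hne
  have hprev : (⟨(blockPos j i : ℕ) - 1, by omega⟩ : Fin (m * n)) =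
      blockPos j ⟨(i : ℕ) - 1, by omega⟩ := by
    ext
    simp only [blockPos]
    omega
  have hdiff := h.2 (blockPos j i) (by simp only [blockPos]; omega) hne
  rwa [hprev] at hdiff

lemma block_mem_mineralBall {m n : ℕ} {x z : Fin (m * n) → ZMod 2} (hz : z ∈ mineralBall t x)
    (j : Fin n) : block z j ∈ mineralBall t (block x j) := by
  obtain ⟨e, he, rfl⟩ := hz
  exact ⟨block e j, he.block j, rfl⟩

end Mineral

theorem stmt15_general {p m n t : ℕ}
    (Φ : (Fin m → ZMod 2) → ZMod p)
    (hΦ : ∀ u v : Fin m → ZMod 2, u ≠ v →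
      (mineralBall t u ∩ mineralBall t v).Nonempty → Φ u ≠ Φ v)
    (Ct : Finset (Fin n → ZMod p))
    (hdist : ∀ c ∈ Ct, ∀ d ∈ Ct, c ≠ d → 2 * t + 1 ≤ hammingDist c d) :
    mineralCorrecting t (Finset.univ.filter fun x : Fin (m * n) → ZMod 2 =>
      (fun j : Fin n => Φ fun i : Fin m => x ⟨(j : ℕ) * m + (i : ℕ), block_lt j i⟩) ∈ Ct) := by
  intro x hx y hy hxy
  rw [Set.disjoint_left]
  intro z hzx hzy
  have hxy_dist : hammingDist x y ≤ 2 * t := calc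
    hammingDist x y ≤ hammingDist x z + hammingDist y z := hammingDist_triangle_right x y z
    _ ≤ t + t := add_le_add (hammingDist_le_of_mem_mineralBall hzx)
      (hammingDist_le_of_mem_mineralBall hzy)
    _ = 2 * t := (two_mul t).symm
  have hcolors : (fun j => Φ (block x j)) = fun j => Φ (block y j) := by
    by_contra hne
    have hfar : 2 * t + 1 ≤ hammingDist (fun j => Φ (block x j)) fun j => Φ (block y j) :=
      hdist _ (Finset.mem_filter.mp hx).2 _ (Finset.mem_filter.mp hy).2 hne
    have hnear := (hammingDist_comp_le_hammingDist fun _ => Φ).trans (hammingDist_block_le x y)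
    omega
  refine hxy (block_injective (funext fun j => ?_))
  by_contra hne
  exact hΦ _ _ hne ⟨block z j, block_mem_mineralBall hzx j, block_mem_mineralBall hzy j⟩
    (congrFun hcolors j)

/-- Construction 2: given a proper coloring `Φ` of the mineral-confusability graph on
`GF(2)^m` with `p` colors (`p` prime), and a code `C_t ⊆ GF(p)^n` with minimum Hamming
distance at least `2t+1`, the binary code of length `mn` consisting of all `x` whose
blockwise image under `Φ` lies in `C_t` is a `t`-mineral-error-correcting code. -/
theorem stmt15 {p m n t : ℕ} (hp : p.Prime) (hm : 1 ≤ m)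
    (Φ : (Fin m → ZMod 2) → ZMod p)
    (hΦ : ∀ u v : Fin m → ZMod 2, u ≠ v →
      (mineralBall t u ∩ mineralBall t v).Nonempty → Φ u ≠ Φ v)
    (Ct : Finset (Fin n → ZMod p))
    (hdist : ∀ c ∈ Ct, ∀ d ∈ Ct, c ≠ d → 2 * t + 1 ≤ hammingDist c d) :
    mineralCorrecting t (Finset.univ.filter fun x : Fin (m * n) → ZMod 2 =>
      (fun j : Fin n => Φ fun i : Fin m => x ⟨(j : ℕ) * m + (i : ℕ), block_lt j i⟩) ∈ Ct) :=
  stmt15_general Φ hΦ Ct hdist
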